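/- Let V be a finite-dimensional complex vector space with symmetric nondegenerate bilinear form ⟨·,·⟩ and μ an antisymmetric diagonalizable endomorphism. Suppose R_k ∈ End(V) satisfies [μ, R_k] = k·R_k and ⟨R_k(a), b⟩ + (-1)^k ⟨a, R_k(b)⟩ = 0 for each k ≥ 1, and set R = ∑_k R_k. Then {R(a), b} + {a, R(b)} = 0 for all a, b ∈ V, where {a, b} := ⟨exp(πi μ)a, b⟩. -/

import Mathlib

/-!
Put `E = exp (πiμ)`. Antisymmetry of `μ` gives `Eᵀη = η exp (-πiμ)`, and `[μ, R_k] = k R_k`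
gives `exp (-πiμ) R_k = e^{-πik} R_k exp (-πiμ) = (-1)^k R_k exp (-πiμ)`. This sign cancels the
sign in the twisted symmetry of `R_k`, so every `R_k`, hence `R`, is skew-adjoint for `{·,·}`,
whose Gram matrix is `Eᵀη`.
-/

open NormedSpace

section BanachAlgebra

variable {𝔸 : Type*} [NormedRing 𝔸] [NormedAlgebra ℂ 𝔸] [CompleteSpace 𝔸]

theorem exp_smul_mul_of_commutator_eq_smul {μ R : 𝔸} {k : ℂ} (hR : μ * R - R * μ = k • R)
    (t : ℂ) : exp (t • μ) * R = Complex.exp (t * k) • (R * exp (t • μ)) := by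
  have hsemi : SemiconjBy R (t • μ + algebraMap ℂ 𝔸 (t * k)) (t • μ) := by
    rw [sub_eq_iff_eq_add] at hR
    rw [SemiconjBy, mul_add, ← Algebra.commutes, ← Algebra.smul_def, mul_smul_comm,
      smul_mul_assoc, hR, mul_smul, smul_add, add_comm]
  let : NormedAlgebra ℚ 𝔸 := NormedAlgebra.restrictScalars ℚ ℂ 𝔸
  rw [← hsemi.exp_right.eq, exp_add_of_commute (Algebra.commutes _ _).symm,
    ← algebraMap_exp_comm, ← Complex.exp_eq_exp_ℂ, ← Algebra.commutes, ← Algebra.smul_def,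
    mul_smul_comm]

end BanachAlgebra

namespace Matrix

variable {n : Type*} [Fintype n] [DecidableEq n]

theorem isSkewAdjoint_mul_of_isAdjointPair {K : Type*} [CommRing K] {η F R : Matrix n n K}
    {s : K} (hR : IsAdjointPair η η R (-(s • R))) (hF : F * R = s • (R * F)) :
    (η * F).IsSkewAdjoint R := by
  rw [Matrix.IsSkewAdjoint, IsAdjointPair, ← Matrix.mul_assoc, hR, Matrix.mul_assoc, neg_mul,
    smul_mul_assoc, ← hF, mul_neg, mul_neg, Matrix.mul_assoc]

theorem transpose_exp_mul_of_isSkewAdjoint {η μ : Matrix n n ℂ} (h : η.IsSkewAdjoint μ) :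
    (exp μ)ᵀ * η = η * exp (-μ) := by
  have hsemi : SemiconjBy η (-μ) μᵀ := h.symm
  rw [← exp_transpose]
  exact open scoped Norms.Operator in hsemi.exp_right.eq.symm

theorem exp_smul_mul_of_commutator_eq_smul {μ R : Matrix n n ℂ} {k : ℂ}
    (hR : μ * R - R * μ = k • R) (t : ℂ) :
    exp (t • μ) * R = Complex.exp (t * k) • (R * exp (t • μ)) :=
  open scoped Norms.Operator in _root_.exp_smul_mul_of_commutator_eq_smul hR t

end Matrix

theorem Complex.exp_neg_pi_mul_I_mul_natCast (k : ℕ) :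
    Complex.exp (-(Real.pi * Complex.I) * k) = (-1) ^ k := by
  rw [mul_comm, Complex.exp_nat_mul, Complex.exp_neg, Complex.exp_pi_mul_I, inv_neg, inv_one]

open Matrix

theorem stmt_2_general {n : Type*} [Fintype n] [DecidableEq n]
    (η μ : Matrix n n ℂ)
    (hanti : μᵀ * η + η * μ = 0)
    (R : ℕ → Matrix n n ℂ) (N : ℕ)
    (hcomm : ∀ k, 1 ≤ k → μ * R k - R k * μ = (k : ℂ) • R k)
    (hsym : ∀ k, 1 ≤ k → (R k)ᵀ * η + ((-1 : ℂ) ^ k) • (η * R k) = 0)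
    (S : Matrix n n ℂ) (hS : S = ∑ k ∈ Finset.Icc 1 N, R k) :
    Sᵀ * (NormedSpace.exp (((Real.pi : ℂ) * Complex.I) • μ))ᵀ * η
      + (NormedSpace.exp (((Real.pi : ℂ) * Complex.I) • μ))ᵀ * η * S = 0 := by
  set c : ℂ := Real.pi * Complex.I
  have hμ : μ ∈ skewAdjointMatricesSubmodule η := by
    rw [mem_skewAdjointMatricesSubmodule, Matrix.IsSkewAdjoint, IsAdjointPair, mul_neg]
    exact eq_neg_of_add_eq_zero_left hanti
  have hEη : (exp (c • μ))ᵀ * η = η * exp ((-c) • μ) := by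
    rw [neg_smul]
    exact transpose_exp_mul_of_isSkewAdjoint
      ((mem_skewAdjointMatricesSubmodule _ _).mp (Submodule.smul_mem _ c hμ))
  have hS_mem : S ∈ skewAdjointMatricesSubmodule ((exp (c • μ))ᵀ * η) := by
    rw [hS]
    refine Submodule.sum_mem _ fun k hk => ?_
    have hk1 := (Finset.mem_Icc.mp hk).1
    rw [mem_skewAdjointMatricesSubmodule, hEη]
    refine isSkewAdjoint_mul_of_isAdjointPair (s := (-1) ^ k) ?_ ?_
    · rw [IsAdjointPair, mul_neg, mul_smul_comm]
      exact eq_neg_of_add_eq_zero_left (hsym k hk1)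
    · rw [Matrix.exp_smul_mul_of_commutator_eq_smul (hcomm k hk1),
        Complex.exp_neg_pi_mul_I_mul_natCast]
  rw [mem_skewAdjointMatricesSubmodule, Matrix.IsSkewAdjoint, IsAdjointPair] at hS_mem
  rw [Matrix.mul_assoc, hS_mem, mul_neg, neg_add_cancel]

/-- If μ is antisymmetric (w.r.t. η) and diagonalizable, and R = ∑_{k≥1} R_k with
[μ, R_k] = k R_k and ⟨R_k a, b⟩ + (-1)^k ⟨a, R_k b⟩ = 0, then
{R a, b} + {a, R b} = 0 where {a,b} := ⟨exp(πi μ) a, b⟩; in matrix form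
Sᵀ (exp(πiμ))ᵀ η + (exp(πiμ))ᵀ η S = 0 for S = ∑_{k=1}^N R_k. -/
theorem stmt_2 {n : Type*} [Fintype n] [DecidableEq n]
    (η μ : Matrix n n ℂ) (hsymm : ηᵀ = η) (hnd : IsUnit η.det)
    (hanti : μᵀ * η + η * μ = 0)
    (hdiag : ∃ P : Matrix n n ℂ, ∃ d : n → ℂ,
      IsUnit P.det ∧ μ = P * Matrix.diagonal d * P⁻¹)
    (R : ℕ → Matrix n n ℂ) (N : ℕ)
    (hcomm : ∀ k, 1 ≤ k → μ * R k - R k * μ = (k : ℂ) • R k)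
    (hsym : ∀ k, 1 ≤ k → (R k)ᵀ * η + ((-1 : ℂ) ^ k) • (η * R k) = 0)
    (S : Matrix n n ℂ) (hS : S = ∑ k ∈ Finset.Icc 1 N, R k) :
    Sᵀ * (NormedSpace.exp (((Real.pi : ℂ) * Complex.I) • μ))ᵀ * η
      + (NormedSpace.exp (((Real.pi : ℂ) * Complex.I) • μ))ᵀ * η * S = 0 :=
  stmt_2_general η μ hanti R N hcomm hsym S hS
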